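/- Let S, F̂ be discrete random variables with S taking values in a finite set of cardinality M ≥ 2, and suppose P(F̂ ≠ S) ≤ ε with 0 < ε < 1. Then H(S | F̂) ≤ h(ε) + ε·log₂(M), where h(ε) = −ε log₂ ε − (1−ε) log₂(1−ε) is the binary entropy function. -/

import Mathlib

open Finset

structure FinProb (Ω : Type) [Fintype Ω] where
  p : Ω → ℝ
  nonneg : ∀ ω, 0 ≤ p ω
  sum_one : ∑ ω, p ω = 1

namespace FinProb

variable {Ω : Type} [Fintype Ω] (μ : FinProb Ω)

/-- P(X = x) -/
noncomputable def prob {α : Type} [DecidableEq α] (X : Ω → α) (x : α) : ℝ :=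
  ∑ ω, if X ω = x then μ.p ω else 0

/-- Shannon entropy (base 2) of a random variable. -/
noncomputable def H {α : Type} [Fintype α] [DecidableEq α] (X : Ω → α) : ℝ :=
  -∑ x, μ.prob X x * Real.logb 2 (μ.prob X x)

/-- Mutual information I(X;Y). -/
noncomputable def I {α β : Type} [Fintype α] [DecidableEq α] [Fintype β] [DecidableEq β]
    (X : Ω → α) (Y : Ω → β) : ℝ :=
  μ.H X + μ.H Y - μ.H (fun ω => (X ω, Y ω))

/-- Conditional entropy H(X|Z). -/
noncomputable def condH {α γ : Type} [Fintype α] [DecidableEq α] [Fintype γ] [DecidableEq γ]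
    (X : Ω → α) (Z : Ω → γ) : ℝ :=
  μ.H (fun ω => (X ω, Z ω)) - μ.H Z

/-- Conditional mutual information I(X;Y|Z). -/
noncomputable def condI {α β γ : Type} [Fintype α] [DecidableEq α] [Fintype β] [DecidableEq β]
    [Fintype γ] [DecidableEq γ] (X : Ω → α) (Y : Ω → β) (Z : Ω → γ) : ℝ :=
  μ.condH X Z + μ.condH Y Z - μ.condH (fun ω => (X ω, Y ω)) Z

/-- X and Y are conditionally independent given Z. -/
def CondIndep {α β γ : Type} [DecidableEq α] [DecidableEq β] [DecidableEq γ]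
    (X : Ω → α) (Y : Ω → β) (Z : Ω → γ) : Prop :=
  ∀ x y z, μ.prob (fun ω => (X ω, Y ω, Z ω)) (x, y, z) * μ.prob Z z
    = μ.prob (fun ω => (X ω, Z ω)) (x, z) * μ.prob (fun ω => (Y ω, Z ω)) (y, z)

/-- X and Y are independent. -/
def Indep {α β : Type} [DecidableEq α] [DecidableEq β] (X : Ω → α) (Y : Ω → β) : Prop :=
  ∀ x y, μ.prob (fun ω => (X ω, Y ω)) (x, y) = μ.prob X x * μ.prob Y y

end FinProb

/-- Binary entropy function (base 2). -/
noncomputable def binEnt (x : ℝ) : ℝ := -x * Real.logb 2 x - (1 - x) * Real.logb 2 (1 - x)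

/-!
Gibbs' inequality bounds `H(S | F̂)` by the cross-entropy `-E[log m(S | F̂)]` against any
positive kernel `m` with `∑ₓ m(x | y) ≤ 1`. The kernel equal to `1 - ε` on the diagonal and
`ε / M` off it gives `(1 - P) (-log (1 - ε)) + P (-log (ε / M))` for the error probability
`P = P(F̂ ≠ S)`, which is affine in `P`, equals `h(ε) + ε log M` at `P = ε`, and is nondecreasing
in `P` as long as `ε / M ≤ 1 - ε`. In the remaining range `h(ε) + ε log M ≥ log M`, and the
uniform kernel gives `H(S | F̂) ≤ log M`.
-/

open Finset Real

theorem sum_mul_logb_le_sum_mul_logb {ι : Type} [Fintype ι] {b : ℝ} (hb : 1 < b) {q r : ι → ℝ}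
    (hq : ∀ i, 0 ≤ q i) (hr : ∀ i, 0 ≤ r i) (hqr : ∀ i, 0 < q i → 0 < r i)
    (hsum : ∑ i, r i ≤ ∑ i, q i) :
    ∑ i, q i * logb b (r i) ≤ ∑ i, q i * logb b (q i) := by
  have hterm : ∀ i, q i * log (r i) ≤ q i * log (q i) + (r i - q i) := fun i => by
    rcases (hq i).eq_or_lt with h | h
    · simp [← h, hr i]
    · have hlog := log_le_sub_one_of_pos (div_pos (hqr i h) h)
      rw [log_div (hqr i h).ne' h.ne'] at hlog
      have := mul_le_mul_of_nonneg_left hlog h.le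
      rw [mul_sub, mul_sub, mul_div_cancel₀ _ h.ne'] at this
      linarith
  have hlog : ∑ i, q i * log (r i) ≤ ∑ i, q i * log (q i) :=
    calc ∑ i, q i * log (r i) ≤ ∑ i, (q i * log (q i) + (r i - q i)) := sum_le_sum fun i _ => hterm i
      _ = ∑ i, q i * log (q i) + (∑ i, r i - ∑ i, q i) := by rw [sum_add_distrib, sum_sub_distrib]
      _ ≤ ∑ i, q i * log (q i) := by linarith
  simp only [logb, mul_div_assoc', ← sum_div]
  exact div_le_div_of_nonneg_right hlog (log_pos hb).le

theorem logb_le_binEnt_add_mul_logb {M ε : ℝ} (hM : 0 < M) (hε0 : 0 < ε) (hε1 : ε < 1)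
    (hεM : M * (1 - ε) < ε) : logb 2 M ≤ binEnt ε + ε * logb 2 M := by
  have hprod : logb 2 M + logb 2 (1 - ε) ≤ 0 := by
    rw [← logb_mul hM.ne' (by linarith)]
    exact logb_nonpos one_lt_two (by nlinarith) (by linarith)
  have hε : logb 2 ε ≤ 0 := logb_nonpos one_lt_two hε0.le hε1.le
  unfold binEnt
  nlinarith [mul_nonneg hε0.le (neg_nonneg.2 hε), mul_nonneg (sub_nonneg.2 hε1.le) (neg_nonneg.2 hprod)]

namespace FinProb

variable {Ω : Type} [Fintype Ω] (μ : FinProb Ω)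

theorem prob_nonneg {α : Type} [DecidableEq α] (X : Ω → α) (x : α) : 0 ≤ μ.prob X x :=
  sum_nonneg fun ω _ => by split_ifs <;> simp [μ.nonneg ω]

theorem sum_prob_mul {α : Type} [Fintype α] [DecidableEq α] (X : Ω → α) (g : α → ℝ) :
    ∑ x, μ.prob X x * g x = ∑ ω, μ.p ω * g (X ω) := by
  simp only [prob, sum_mul, ite_mul, zero_mul]
  rw [sum_comm]
  exact sum_congr rfl fun ω _ => by simp

theorem sum_prob {α : Type} [Fintype α] [DecidableEq α] (X : Ω → α) : ∑ x, μ.prob X x = 1 := by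
  simpa [μ.sum_one] using μ.sum_prob_mul X 1

theorem prob_pair_le {α β : Type} [DecidableEq α] [DecidableEq β] (X : Ω → α) (Y : Ω → β)
    (x : α) (y : β) : μ.prob (fun ω => (X ω, Y ω)) (x, y) ≤ μ.prob Y y :=
  sum_le_sum fun ω _ => by split_ifs <;> simp_all [μ.nonneg ω]

theorem sum_prob_pair_mul_snd {α β : Type} [Fintype α] [DecidableEq α] [Fintype β] [DecidableEq β]
    (X : Ω → α) (Y : Ω → β) (g : β → ℝ) :
    ∑ z : α × β, μ.prob (fun ω => (X ω, Y ω)) z * g z.2 = ∑ y, μ.prob Y y * g y := by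
  rw [sum_prob_mul, sum_prob_mul]

theorem sum_mul_ite (P : Ω → Prop) [DecidablePred P] (u v : ℝ) :
    ∑ ω, μ.p ω * (if P ω then v else u)
      = (1 - ∑ ω, if P ω then μ.p ω else 0) * u + (∑ ω, if P ω then μ.p ω else 0) * v := by
  have hterm : ∀ ω, μ.p ω * (if P ω then v else u)
      = μ.p ω * u + (if P ω then μ.p ω else 0) * (v - u) := fun ω => by split_ifs <;> ring
  rw [sum_congr rfl fun ω _ => hterm ω, sum_add_distrib, ← sum_mul, ← sum_mul, μ.sum_one]
  ring

theorem condH_le_neg_sum_mul_logb {α β : Type} [Fintype α] [DecidableEq α] [Fintype β]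
    [DecidableEq β] (X : Ω → α) (Y : Ω → β) (m : α → β → ℝ) (hm : ∀ x y, 0 < m x y)
    (hm1 : ∀ y, ∑ x, m x y ≤ 1) :
    μ.condH X Y ≤ -∑ ω, μ.p ω * logb 2 (m (X ω) (Y ω)) := by
  set q := μ.prob (fun ω => (X ω, Y ω))
  have hq : ∀ z, 0 ≤ q z := μ.prob_nonneg _
  have hsupp : ∀ z : α × β, 0 < q z → 0 < μ.prob Y z.2 :=
    fun z hz => hz.trans_le (μ.prob_pair_le X Y z.1 z.2)
  have hsplit : ∀ z : α × β, q z * logb 2 (μ.prob Y z.2 * m z.1 z.2)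
      = q z * logb 2 (μ.prob Y z.2) + q z * logb 2 (m z.1 z.2) := fun z => by
    rcases (hq z).eq_or_lt with h | h
    · simp [q, ← h]
    · rw [logb_mul (hsupp z h).ne' (hm _ _).ne', mul_add]
  have hmass : ∑ z : α × β, μ.prob Y z.2 * m z.1 z.2 ≤ ∑ z, q z :=
    calc ∑ z : α × β, μ.prob Y z.2 * m z.1 z.2 = ∑ y, μ.prob Y y * ∑ x, m x y := by
          rw [Fintype.sum_prod_type, sum_comm]; simp only [mul_sum]
      _ ≤ ∑ y, μ.prob Y y * 1 :=
          sum_le_sum fun y _ => mul_le_mul_of_nonneg_left (hm1 y) (μ.prob_nonneg Y y)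
      _ = ∑ z, q z := by simp only [mul_one, μ.sum_prob, q]
  have hgibbs := sum_mul_logb_le_sum_mul_logb one_lt_two hq
    (fun z => mul_nonneg (μ.prob_nonneg Y z.2) (hm z.1 z.2).le)
    (fun z hz => mul_pos (hsupp z hz) (hm z.1 z.2)) hmass
  have hHY : ∑ y, μ.prob Y y * logb 2 (μ.prob Y y) = ∑ z, q z * logb 2 (μ.prob Y z.2) :=
    (μ.sum_prob_pair_mul_snd X Y fun y => logb 2 (μ.prob Y y)).symm
  have hcross : ∑ ω, μ.p ω * logb 2 (m (X ω) (Y ω)) = ∑ z, q z * logb 2 (m z.1 z.2) :=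
    (μ.sum_prob_mul (fun ω => (X ω, Y ω)) fun z => logb 2 (m z.1 z.2)).symm
  rw [sum_congr rfl fun z _ => hsplit z, sum_add_distrib] at hgibbs
  unfold condH H
  rw [hHY, hcross]
  linarith

theorem condH_le_logb_card {α β : Type} [Fintype α] [DecidableEq α] [Nonempty α] [Fintype β]
    [DecidableEq β] (X : Ω → α) (Y : Ω → β) : μ.condH X Y ≤ logb 2 (Fintype.card α) := by
  have hcard : (0 : ℝ) < Fintype.card α := by exact_mod_cast Fintype.card_pos
  have h := μ.condH_le_neg_sum_mul_logb X Y (fun _ _ => (Fintype.card α : ℝ)⁻¹)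
    (fun _ _ => inv_pos.2 hcard) (fun _ => by simp [hcard.ne'])
  simpa [← sum_mul, μ.sum_one, logb_inv] using h

theorem condH_le_binEnt_add_mul_logb_card_of_le {S : Type} [Fintype S] [DecidableEq S]
    [Nonempty S] (s fhat : Ω → S) {ε : ℝ} (hε0 : 0 < ε) (hε1 : ε < 1)
    (hεM : ε ≤ Fintype.card S * (1 - ε))
    (herr : (∑ ω, if fhat ω ≠ s ω then μ.p ω else 0) ≤ ε) :
    μ.condH s fhat ≤ binEnt ε + ε * logb 2 (Fintype.card S) := by
  have hM : (0 : ℝ) < Fintype.card S := by exact_mod_cast Fintype.card_pos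
  set M : ℝ := (Fintype.card S : ℝ)
  have hεM' : ε / M ≤ 1 - ε := by rw [div_le_iff₀ hM]; linarith
  have hkernel := μ.condH_le_neg_sum_mul_logb s fhat
    (fun x y => if y ≠ x then ε / M else 1 - ε)
    (fun _ _ => by split_ifs <;> [positivity; linarith])
    (fun y => calc
      ∑ x, (if y ≠ x then ε / M else 1 - ε) ≤ ∑ x, (ε / M + if y = x then 1 - ε else 0) :=
        sum_le_sum fun x _ => by split_ifs <;> simp_all [div_nonneg hε0.le hM.le]
      _ = 1 := by
        rw [sum_add_distrib, sum_const, sum_ite_eq, card_univ, nsmul_eq_mul, if_pos (mem_univ y),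
          mul_div_cancel₀ _ hM.ne']
        ring)
  simp only [apply_ite (logb 2)] at hkernel
  rw [μ.sum_mul_ite (fun ω => fhat ω ≠ s ω)] at hkernel
  have hlog := logb_le_logb_of_le one_lt_two (by positivity) hεM'
  rw [logb_div hε0.ne' hM.ne'] at hkernel hlog
  unfold binEnt
  nlinarith [mul_nonneg (sub_nonneg.2 herr) (sub_nonneg.2 hlog)]

end FinProb

theorem stmt8 {Ω S : Type} [Fintype Ω] [Fintype S] [DecidableEq S]
    (μ : FinProb Ω) (s fhat : Ω → S) (ε : ℝ)
    (hM : 2 ≤ Fintype.card S)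
    (hε0 : 0 < ε) (hε1 : ε < 1)
    (herr : (∑ ω, if fhat ω ≠ s ω then μ.p ω else 0) ≤ ε) :
    μ.condH s fhat ≤ binEnt ε + ε * Real.logb 2 (Fintype.card S) := by
  have : Nonempty S := Fintype.card_pos_iff.mp (by omega)
  rcases le_or_gt ε (Fintype.card S * (1 - ε)) with hεM | hεM
  · exact μ.condH_le_binEnt_add_mul_logb_card_of_le s fhat hε0 hε1 hεM herr
  · exact (μ.condH_le_logb_card s fhat).trans
      (logb_le_binEnt_add_mul_logb (by exact_mod_cast Fintype.card_pos) hε0 hε1 hεM)
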